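/- arXiv:2303.05825 — 11 statements merged into one kernel-verified Lean document; each statement's English description precedes it below -/
import Mathlib

section
/- The Huber smoothing function is globally Lipschitz continuous on ℝ × ℝ with the explicit estimate |h(ε,t) − h(δ,s)| ≤ |t − s| + (1/2)·|ε − δ| for all ε, δ, s, t ∈ ℝ. -/
/-!
`h(ε, ·)` is the convex conjugate of `v ↦ |ε| v² / 2` on `[0, 1]`:
`h(ε, t) = max_{v ∈ [0,1]} (v t - |ε| v² / 2)`, also when `ε = 0`.
Each function `(ε, t) ↦ v t - |ε| v² / 2` with `v ∈ [0, 1]` is `1`-Lipschitz in `t` and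
`1/2`-Lipschitz in `ε`, and a pointwise maximum inherits these bounds.
-/

noncomputable def huber (ε t : ℝ) : ℝ :=
  if ε = 0 then max 0 t
  else if |ε| < t then t - |ε| / 2
  else if 0 ≤ t then t ^ 2 / (2 * |ε|)
  else 0

lemma le_huber (ε t : ℝ) {v : ℝ} (hv : v ∈ Set.Icc (0 : ℝ) 1) :
    v * t - |ε| * v ^ 2 / 2 ≤ huber ε t := by
  obtain ⟨hv0, hv1⟩ := hv
  unfold huber
  split_ifs with hε hlt hnn
  · subst hε
    rcases le_total 0 t with ht | ht
    · simp only [abs_zero, zero_mul, zero_div, sub_zero, le_max_iff]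
      exact Or.inr (mul_le_of_le_one_left ht hv1)
    · simp only [abs_zero, zero_mul, zero_div, sub_zero, le_max_iff]
      exact Or.inl (mul_nonpos_of_nonneg_of_nonpos hv0 ht)
  · -- the gap is `(1 - v)(t - |ε|) + |ε|(1 - v)² / 2`
    nlinarith [mul_nonneg (sub_nonneg.mpr hv1) (sub_nonneg.mpr hlt.le),
      mul_nonneg (abs_nonneg ε) (sq_nonneg (1 - v))]
  · have ha : 0 < |ε| := abs_pos.mpr hε
    -- the gap is `(t - |ε| v)² / (2|ε|)`
    rw [le_div_iff₀ (by positivity)]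
    nlinarith [sq_nonneg (t - |ε| * v)]
  · nlinarith [abs_nonneg ε, sq_nonneg v]

lemma exists_huber_eq (ε t : ℝ) :
    ∃ v ∈ Set.Icc (0 : ℝ) 1, huber ε t = v * t - |ε| * v ^ 2 / 2 := by
  unfold huber
  split_ifs with hε hlt hnn
  · subst hε
    rcases le_total 0 t with ht | ht
    · exact ⟨1, by simp, by simp [ht]⟩
    · exact ⟨0, by simp, by simp [ht]⟩
  · exact ⟨1, by simp, by ring⟩
  · have ha : 0 < |ε| := abs_pos.mpr hε
    refine ⟨t / |ε|, ⟨div_nonneg hnn ha.le, div_le_one_of_le₀ (not_lt.mp hlt) ha.le⟩, ?_⟩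
    field_simp
    ring
  · exact ⟨0, by simp, by ring⟩

lemma huber_sub_le (ε δ s t : ℝ) :
    huber ε t - huber δ s ≤ |t - s| + (1 / 2) * |ε - δ| := by
  obtain ⟨v, hv, hεt⟩ := exists_huber_eq ε t
  have hδs := le_huber δ s hv
  obtain ⟨hv0, hv1⟩ := hv
  have hvt : v * (t - s) ≤ |t - s| := by
    nlinarith [le_abs_self (t - s), abs_nonneg (t - s)]
  calc huber ε t - huber δ s
      ≤ v * (t - s) + (|δ| - |ε|) * v ^ 2 / 2 := by rw [hεt]; linarith
    _ ≤ |t - s| + (1 / 2) * |ε - δ| := by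
      have hδε : |δ| - |ε| ≤ |ε - δ| := abs_sub_comm ε δ ▸ abs_sub_abs_le_abs_sub δ ε
      nlinarith [abs_nonneg (ε - δ), pow_le_one₀ hv0 hv1 (n := 2), sq_nonneg v]

/-- Global Lipschitz continuity of the Huber function on `ℝ × ℝ`:
`|h(ε,t) − h(δ,s)| ≤ |t − s| + |ε − δ|/2`. -/
theorem huber_global_lipschitz (ε δ s t : ℝ) :
    |huber ε t - huber δ s| ≤ |t - s| + (1 / 2) * |ε - δ| := by
  refine abs_sub_le_iff.mpr ⟨huber_sub_le ε δ s t, ?_⟩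
  rw [abs_sub_comm t s, abs_sub_comm ε δ]
  exact huber_sub_le δ ε t s
end

section
/- For every ε ≠ 0 and every t ∈ ℝ, the function s ↦ h(ε,s) is differentiable at t with derivative equal to min(1, max(0, t/|ε|)); in particular this derivative lies in the interval [0,1]. -/
/-!
For `ε ≠ 0` the map `s ↦ h(ε,s)` is the antiderivative, vanishing at `0`, of the continuous ramp
`u ↦ min 1 (max 0 (u / |ε|))`. The fundamental theorem of calculus then yields the derivative at
every point at once, the two breakpoints `0` and `|ε|` included.
-/

open intervalIntegral Set

section ramp

variable {c s : ℝ}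

theorem integral_min_one_max_zero_div_of_nonpos (hc : 0 ≤ c) (hs : s ≤ 0) :
    ∫ u in (0)..s, min 1 (max 0 (u / c)) = 0 := by
  rw [integral_congr (g := fun _ => 0), integral_zero]
  intro u hu
  rw [uIcc_of_ge hs] at hu
  simp [max_eq_left (div_nonpos_of_nonpos_of_nonneg hu.2 hc)]

theorem integral_min_one_max_zero_div_of_le (hc : 0 < c) (hs₀ : 0 ≤ s) (hs : s ≤ c) :
    ∫ u in (0)..s, min 1 (max 0 (u / c)) = s ^ 2 / (2 * c) := by
  rw [integral_congr (g := fun u => u / c), integral_div, integral_id]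
  · ring
  intro u hu
  rw [uIcc_of_le hs₀] at hu
  simp [max_eq_right (div_nonneg hu.1 hc.le), (div_le_one hc).2 (hu.2.trans hs)]

theorem integral_min_one_max_zero_div_of_ge (hc : 0 < c) (hs : c ≤ s) :
    ∫ u in (0)..s, min 1 (max 0 (u / c)) = s - c / 2 := by
  have hint : ∀ a b, IntervalIntegrable (fun u => min 1 (max 0 (u / c))) MeasureTheory.volume a b :=
    fun a b => (by fun_prop : Continuous fun u => min 1 (max 0 (u / c))).intervalIntegrable a b
  rw [← integral_add_adjacent_intervals (hint 0 c) (hint c s),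
    integral_min_one_max_zero_div_of_le hc hc.le le_rfl, integral_congr (g := fun _ => 1),
    integral_const]
  · field_simp; ring
  intro u hu
  rw [uIcc_of_le hs] at hu
  simp [(one_le_div hc).2 hu.1]

end ramp

theorem huber_eq_integral {ε : ℝ} (hε : ε ≠ 0) (s : ℝ) :
    huber ε s = ∫ u in (0)..s, min 1 (max 0 (u / |ε|)) := by
  have hc : 0 < |ε| := abs_pos.2 hε
  rw [huber, if_neg hε]
  split_ifs with hgt hnonneg
  · rw [integral_min_one_max_zero_div_of_ge hc hgt.le]
  · rw [integral_min_one_max_zero_div_of_le hc hnonneg (not_lt.1 hgt)]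
  · rw [integral_min_one_max_zero_div_of_nonpos hc.le (not_le.1 hnonneg).le]

/-- For `ε ≠ 0`, the map `s ↦ h(ε,s)` is differentiable at every `t` with derivative
`min 1 (max 0 (t/|ε|))`, which lies in `[0,1]`. -/
theorem huber_hasDerivAt_snd (ε t : ℝ) (hε : ε ≠ 0) :
    HasDerivAt (fun s => huber ε s) (min 1 (max 0 (t / |ε|))) t ∧
      0 ≤ min 1 (max 0 (t / |ε|)) ∧ min 1 (max 0 (t / |ε|)) ≤ 1 := by
  refine ⟨?_, le_min zero_le_one (le_max_left _ _), min_le_left _ _⟩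
  simp only [huber_eq_integral hε]
  exact ((by fun_prop : Continuous fun u => min 1 (max 0 (u / |ε|))).integral_hasStrictDerivAt
    0 t).hasDerivAt
end

section
/- For every t ∈ ℝ and every ε ≠ 0, the function e ↦ h(e,t) is differentiable at ε with derivative equal to −(sign ε)·(min(1, max(0, t/|ε|)))²/2, where sign ε = 1 if ε > 0 and sign ε = −1 if ε < 0; in particular the absolute value of this derivative is at most 1/2. -/
lemma huber_pos_eq {e t : ℝ} (he : 0 < e) :
    huber e t = if e < t then t - e / 2 else if 0 ≤ t then t ^ 2 / (2 * e) else 0 := by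
  rw [huber, if_neg (ne_of_gt he), abs_of_pos he]

lemma huber_hasDerivAt_pos (ε t : ℝ) (hε : 0 < ε) :
    HasDerivAt (fun e => huber e t) (-(min 1 (max 0 (t / ε))) ^ 2 / 2) ε := by
  rcases le_or_gt t 0 with ht | ht
  · -- huber = 0 near ε
    have heq : (fun e => huber e t) =ᶠ[nhds ε] fun _ => (0:ℝ) := by
      filter_upwards [Ioi_mem_nhds hε] with e he
      rw [huber_pos_eq he, if_neg (not_lt.mpr (ht.trans he.le))]
      split_ifs with h2
      · have h0 : t = 0 := le_antisymm ht h2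
        simp [h0]
      · rfl
    have hmax : max 0 (t / ε) = 0 := max_eq_left (by rw [div_nonpos_iff]; exact Or.inr ⟨ht, hε.le⟩)
    have hv : (-(min 1 (max 0 (t / ε))) ^ 2 / 2 : ℝ) = 0 := by
      rw [hmax, min_eq_right (by norm_num)]; norm_num
    rw [hv]
    exact (hasDerivAt_const ε (0:ℝ)).congr_of_eventuallyEq heq
  · rcases lt_trichotomy t ε with hlt | heqc | hgt
    · -- 0 < t < ε : huber = t^2/(2e)
      have heq : (fun e => huber e t) =ᶠ[nhds ε] fun e => t ^ 2 / 2 * e⁻¹ := by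
        filter_upwards [Ioi_mem_nhds hlt] with e he
        have he0 : 0 < e := ht.trans he
        rw [huber_pos_eq he0, if_neg (not_lt.mpr he.le), if_pos ht.le]
        field_simp
      have hder : HasDerivAt (fun e => t ^ 2 / 2 * e⁻¹) (t ^ 2 / 2 * (-(ε ^ 2)⁻¹)) ε :=
        (hasDerivAt_inv hε.ne').const_mul _
      have hval : t ^ 2 / 2 * (-(ε ^ 2)⁻¹) = -(min 1 (max 0 (t / ε))) ^ 2 / 2 := by
        have h1 : max 0 (t / ε) = t / ε := max_eq_right (by positivity)
        have h2 : min 1 (t / ε) = t / ε := min_eq_right ((div_le_one hε).mpr hlt.le)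
        rw [h1, h2]; field_simp
      have := hder.congr_of_eventuallyEq heq
      rwa [hval] at this
    · -- t = ε : gluing
      subst heqc
      have hval : (-(min 1 (max 0 (t / t))) ^ 2 / 2 : ℝ) = -(1/2) := by
        rw [div_self ht.ne', max_eq_right zero_le_one, min_self]; norm_num
      rw [hval]
      have hmemval : huber t t = t - t / 2 := by
        rw [huber_pos_eq ht, if_neg (lt_irrefl t), if_pos ht.le]
        field_simp; ring
      have hleft : HasDerivWithinAt (fun e => huber e t) (-(1/2)) (Set.Iic t) t := by
        have hg : HasDerivAt (fun e => t - e / 2) (-(1/2)) t := by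
          simpa using ((hasDerivAt_id t).div_const 2).const_sub t
        refine hg.hasDerivWithinAt.congr_of_eventuallyEq ?_ hmemval
        filter_upwards [self_mem_nhdsWithin, nhdsWithin_le_nhds (Ioi_mem_nhds ht)] with e he1 he2
        rcases lt_or_eq_of_le (Set.mem_Iic.mp he1) with hlt | heq
        · rw [huber_pos_eq he2, if_pos hlt]
        · rw [heq, hmemval]
      have hright : HasDerivWithinAt (fun e => huber e t) (-(1/2)) (Set.Ici t) t := by
        have hg : HasDerivAt (fun e => t ^ 2 / 2 * e⁻¹) (t ^ 2 / 2 * (-(t ^ 2)⁻¹)) t :=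
          (hasDerivAt_inv ht.ne').const_mul _
        have hv2 : t ^ 2 / 2 * (-(t ^ 2)⁻¹) = -(1/2) := by field_simp
        rw [hv2] at hg
        refine hg.hasDerivWithinAt.congr_of_eventuallyEq ?_ (by rw [hmemval]; field_simp; ring)
        filter_upwards [self_mem_nhdsWithin] with e he1
        have he0 : 0 < e := lt_of_lt_of_le ht he1
        rw [huber_pos_eq he0, if_neg (not_lt.mpr he1), if_pos ht.le]
        field_simp
      have := hleft.union hright
      rwa [Set.Iic_union_Ici, hasDerivWithinAt_univ] at this
    · -- t > ε : huber = t - e/2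
      have heq : (fun e => huber e t) =ᶠ[nhds ε] fun e => t - e / 2 := by
        filter_upwards [Ioo_mem_nhds hε hgt] with e he
        rw [huber_pos_eq he.1, if_pos he.2]
      have hder : HasDerivAt (fun e => t - e / 2) (-(1/2)) ε := by
        simpa using ((hasDerivAt_id ε).div_const 2).const_sub t
      have hval : (-(1/2) : ℝ) = -(min 1 (max 0 (t / ε))) ^ 2 / 2 := by
        have h1 : (1:ℝ) ≤ t / ε := (one_le_div hε).mpr hgt.le
        rw [min_eq_left (h1.trans (le_max_right 0 (t/ε)))]
        norm_num
      have := hder.congr_of_eventuallyEq heq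
      rwa [hval] at this

lemma huber_neg_fst (e t : ℝ) : huber (-e) t = huber e t := by
  simp [huber, abs_neg, neg_eq_zero]

lemma abs_bound_aux (s m : ℝ) (hs : |s| = 1) (h0 : 0 ≤ m) (h1 : m ≤ 1) :
    |(-s * m ^ 2 / 2)| ≤ 1 / 2 := by
  rw [abs_div, abs_mul, abs_neg, hs, one_mul, abs_of_nonneg (sq_nonneg m),
    abs_of_nonneg (by norm_num : (0:ℝ) ≤ 2)]
  nlinarith

/-- For `ε ≠ 0`, the map `e ↦ h(e,t)` is differentiable at `ε` with derivative
`-(sign ε)·(min 1 (max 0 (t/|ε|)))²/2` (where `sign ε = 1` for `ε > 0`, `-1` for `ε < 0`);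
its absolute value is at most `1/2`. -/
theorem huber_hasDerivAt_fst (ε t : ℝ) (hε : ε ≠ 0) :
    HasDerivAt (fun e => huber e t)
      (-(Real.sign ε) * (min 1 (max 0 (t / |ε|))) ^ 2 / 2) ε ∧
      |(-(Real.sign ε) * (min 1 (max 0 (t / |ε|))) ^ 2 / 2)| ≤ 1 / 2 := by
  have hm0 : 0 ≤ min 1 (max 0 (t / |ε|)) := le_min zero_le_one (le_max_left 0 _)
  have hm1 : min 1 (max 0 (t / |ε|)) ≤ 1 := min_le_left _ _
  rcases hε.lt_or_gt with hneg | hpos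
  · have hs : Real.sign ε = -1 := Real.sign_of_neg hneg
    refine ⟨?_, abs_bound_aux _ _ (by rw [hs]; norm_num) hm0 hm1⟩
    have H := (huber_hasDerivAt_pos (-ε) t (by linarith)).comp ε (hasDerivAt_neg ε)
    have hfun : ((fun e => huber e t) ∘ fun e => -e) = fun e => huber e t := by
      funext e; simp [Function.comp, huber_neg_fst]
    rw [hfun] at H
    have habs : |ε| = -ε := abs_of_neg hneg
    rw [habs]
    have : -(min 1 (max 0 (t / -ε))) ^ 2 / 2 * -1
        = -Real.sign ε * (min 1 (max 0 (t / -ε))) ^ 2 / 2 := by rw [hs]; ring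
    rwa [this] at H
  · have hs : Real.sign ε = 1 := Real.sign_of_pos hpos
    refine ⟨?_, abs_bound_aux _ _ (by rw [hs]; norm_num) hm0 hm1⟩
    have H := huber_hasDerivAt_pos ε t hpos
    have habs : |ε| = ε := abs_of_pos hpos
    rw [habs]
    have : -(min 1 (max 0 (t / ε))) ^ 2 / 2
        = -Real.sign ε * (min 1 (max 0 (t / ε))) ^ 2 / 2 := by rw [hs]; ring
    rwa [this] at H
end

section
/- The Huber smoothing function h, viewed as a function ℝ × ℝ → ℝ, is continuously differentiable (of class C¹) at every point (ε,t) with ε ≠ 0. -/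
open Topology

theorem hasDerivAt_max_zero_sq (x : ℝ) :
    HasDerivAt (fun y : ℝ => max 0 y ^ 2) (2 * max 0 x) x := by
  -- Off `0` the function is locally `0` or `y²`; at `0` the derivative extends by continuity.
  refine hasDerivAt_of_hasDerivAt_of_ne' (g := fun y => 2 * max 0 y) (x := 0) (fun y hy => ?_)
    (by fun_prop) (by fun_prop) x
  rcases hy.lt_or_gt with hy | hy
  · have hzero : (fun z : ℝ => max 0 z ^ 2) =ᶠ[𝓝 y] fun _ => 0 := by
      filter_upwards [eventually_lt_nhds hy] with z hz
      simp [max_eq_left hz.le]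
    simpa [max_eq_left hy.le] using (hasDerivAt_const y (0 : ℝ)).congr_of_eventuallyEq hzero
  · have hsq : (fun z : ℝ => max 0 z ^ 2) =ᶠ[𝓝 y] fun z => z ^ 2 := by
      filter_upwards [eventually_gt_nhds hy] with z hz
      rw [max_eq_right hz.le]
    simpa [max_eq_right hy.le] using (hasDerivAt_pow 2 y).congr_of_eventuallyEq hsq

theorem contDiff_max_zero_sq : ContDiff ℝ 1 (fun y : ℝ => max 0 y ^ 2) := by
  have hderiv : deriv (fun y : ℝ => max 0 y ^ 2) = fun x => 2 * max 0 x :=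
    funext fun x => (hasDerivAt_max_zero_sq x).deriv
  rw [contDiff_one_iff_deriv, hderiv]
  exact ⟨fun x => (hasDerivAt_max_zero_sq x).differentiableAt, by fun_prop⟩

theorem huber_eq_div_of_ne_zero {ε : ℝ} (t : ℝ) (hε : ε ≠ 0) :
    huber ε t = (max 0 t ^ 2 - max 0 (t - |ε|) ^ 2) / (2 * |ε|) := by
  have hpos : 0 < |ε| := abs_pos.mpr hε
  rw [huber, if_neg hε]
  split_ifs with hbig hnonneg
  · rw [max_eq_right (hpos.trans hbig).le, max_eq_right (sub_pos.mpr hbig).le]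
    field_simp
    ring
  · rw [max_eq_right hnonneg, max_eq_left (sub_nonpos.mpr (not_lt.mp hbig))]
    ring
  · rw [max_eq_left (not_le.mp hnonneg).le,
      max_eq_left (sub_nonpos.mpr ((not_le.mp hnonneg).le.trans hpos.le))]
    simp

/-- The Huber function, viewed as a function `ℝ × ℝ → ℝ`, is continuously differentiable
(of class `C¹`) at every point `(ε,t)` with `ε ≠ 0`. -/
theorem huber_contDiffAt (ε t : ℝ) (hε : ε ≠ 0) :
    ContDiffAt ℝ 1 (fun p : ℝ × ℝ => huber p.1 p.2) (ε, t) := by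
  have habs : ContDiffAt ℝ 1 (fun p : ℝ × ℝ => |p.1|) (ε, t) :=
    (contDiffAt_abs hε).comp (ε, t) contDiffAt_fst
  have hq : ContDiffAt ℝ 1 (fun p : ℝ × ℝ => max 0 p.2 ^ 2) (ε, t) :=
    contDiff_max_zero_sq.contDiffAt.comp (ε, t) contDiffAt_snd
  have hq_shift : ContDiffAt ℝ 1 (fun p : ℝ × ℝ => max 0 (p.2 - |p.1|) ^ 2) (ε, t) :=
    contDiff_max_zero_sq.contDiffAt.comp (ε, t) (contDiffAt_snd.sub habs)
  have hquot : ContDiffAt ℝ 1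
      (fun p : ℝ × ℝ => (max 0 p.2 ^ 2 - max 0 (p.2 - |p.1|) ^ 2) / (2 * |p.1|)) (ε, t) :=
    (hq.sub hq_shift).div (contDiffAt_const.mul habs) (by positivity)
  refine hquot.congr_of_eventuallyEq ?_
  filter_upwards [(isOpen_compl_singleton.preimage continuous_fst).mem_nhds hε] with p hp
  exact huber_eq_div_of_ne_zero p.2 hp
end

section
/- The Huber smoothing function h is directionally differentiable at every point (0,u): for all u, τ, v ∈ ℝ, the one-sided limit of (h(s·τ, u + s·v) − h(0,u))/s as s → 0⁺ exists and equals v − |τ|/2 if u > 0, equals h(τ,v) if u = 0, and equals 0 if u < 0. -/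
/-!
Near `(0,u)` with `u ≠ 0` the point `(sτ, u + sv)` stays, for small `s > 0`, in a single region
where `h` is affine (`t - |ε|/2` if `u > 0`, `0` if `u < 0`), so the difference quotient is
eventually constant. At `(0,0)` positive homogeneity `h(sε, st) = s h(ε,t)` makes the difference
quotient equal to `h(τ,v)` for every `s > 0`.
-/

open Filter Topology

theorem huber_of_abs_lt {ε t : ℝ} (h : |ε| < t) : huber ε t = t - |ε| / 2 := by
  unfold huber
  split_ifs with hε
  · subst hε
    simp only [abs_zero] at h
    simp [max_eq_right h.le]
  · rfl

theorem huber_of_nonpos {ε t : ℝ} (ht : t ≤ 0) : huber ε t = 0 := by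
  unfold huber
  split_ifs with hε hlt hnn
  · exact max_eq_left ht
  · linarith [abs_nonneg ε]
  · simp [le_antisymm ht hnn]
  · rfl

theorem huber_mul_mul {s : ℝ} (hs : 0 < s) (ε t : ℝ) :
    huber (s * ε) (s * t) = s * huber ε t := by
  have habs : |s * ε| = s * |ε| := by rw [abs_mul, abs_of_pos hs]
  unfold huber
  simp only [mul_eq_zero, hs.ne', false_or, habs, mul_lt_mul_iff_right₀ hs,
    mul_nonneg_iff_of_pos_left hs]
  split_ifs
  · rw [mul_max_of_nonneg _ _ hs.le, mul_zero]
  · ring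
  · field_simp
  · rw [mul_zero]

section DifferenceQuotient

variable {u : ℝ} (τ v : ℝ)

theorem tendsto_huber_quotient_of_pos (hu : 0 < u) :
    Tendsto (fun s : ℝ => (huber (s * τ) (u + s * v) - huber 0 u) / s) (𝓝[>] 0)
      (𝓝 (v - |τ| / 2)) := by
  have hsmooth : ∀ᶠ s in 𝓝[>] (0 : ℝ), |s * τ| < u + s * v :=
    (ContinuousAt.eventually_lt (by fun_prop) (by fun_prop) (by simpa using hu)).filter_mono
      nhdsWithin_le_nhds
  refine tendsto_const_nhds.congr' ?_
  filter_upwards [hsmooth, self_mem_nhdsWithin] with s hlt (hs : 0 < s)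
  rw [huber_of_abs_lt hlt, huber_of_abs_lt (by simpa using hu), abs_mul, abs_of_pos hs]
  field_simp
  ring

theorem tendsto_huber_quotient_of_neg (hu : u < 0) :
    Tendsto (fun s : ℝ => (huber (s * τ) (u + s * v) - huber 0 u) / s) (𝓝[>] 0) (𝓝 0) := by
  have hvanish : ∀ᶠ s in 𝓝[>] (0 : ℝ), u + s * v < 0 :=
    (ContinuousAt.eventually_lt (g := fun _ => (0 : ℝ)) (by fun_prop) (by fun_prop)
      (by simpa using hu)).filter_mono nhdsWithin_le_nhds
  refine tendsto_const_nhds.congr' ?_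
  filter_upwards [hvanish] with s hneg
  rw [huber_of_nonpos hneg.le, huber_of_nonpos hu.le, sub_zero, zero_div]

theorem tendsto_huber_quotient_zero :
    Tendsto (fun s : ℝ => (huber (s * τ) (0 + s * v) - huber 0 0) / s) (𝓝[>] 0)
      (𝓝 (huber τ v)) := by
  refine tendsto_const_nhds.congr' ?_
  filter_upwards [self_mem_nhdsWithin] with s (hs : 0 < s)
  rw [zero_add, huber_mul_mul hs, huber_of_nonpos le_rfl, sub_zero, mul_div_cancel_left₀ _ hs.ne']

end DifferenceQuotient

/-- The Huber function is directionally differentiable at every point `(0,u)`: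
the one-sided limit of `(h(s·τ, u + s·v) − h(0,u))/s` as `s → 0⁺` equals `v − |τ|/2` if `u > 0`,
`h(τ,v)` if `u = 0`, and `0` if `u < 0`. -/
theorem huber_directional_derivative (u τ v : ℝ) :
    Filter.Tendsto (fun s : ℝ => (huber (s * τ) (u + s * v) - huber 0 u) / s)
      (nhdsWithin 0 (Set.Ioi 0))
      (nhds (if 0 < u then v - |τ| / 2 else if u = 0 then huber τ v else 0)) := by
  rcases lt_trichotomy u 0 with hu | rfl | hu
  · rw [if_neg hu.not_gt, if_neg hu.ne]
    exact tendsto_huber_quotient_of_neg τ v hu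
  · rw [if_neg (lt_irrefl 0), if_pos rfl]
    exact tendsto_huber_quotient_zero τ v
  · rw [if_pos hu]
    exact tendsto_huber_quotient_of_pos τ v hu
end

section
/- For every u ∈ ℝ there exists δ > 0 such that for all τ, v ∈ ℝ with |τ| < δ and |v| < δ, the exact expansion h(τ, u + v) − h(0,u) = D(u,τ,v) holds, where D(u,τ,v) = v − |τ|/2 if u > 0, D(u,τ,v) = h(τ,v) if u = 0, and D(u,τ,v) = 0 if u < 0. (This local exactness of the directional expansion of h at (0,u) is the scalar ingredient underlying the strong semismoothness of the smoothed projection map.) -/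
/-- Local exactness of the directional expansion of `h` at `(0,u)`: for every `u` there is
`δ > 0` such that for all `|τ| < δ` and `|v| < δ`,
`h(τ, u+v) − h(0,u) = v − |τ|/2` if `u > 0`, `= h(τ,v)` if `u = 0`, and `= 0` if `u < 0`. -/
theorem huber_local_expansion (u : ℝ) :
    ∃ δ > 0, ∀ τ v : ℝ, |τ| < δ → |v| < δ →
      huber τ (u + v) - huber 0 u =
        (if 0 < u then v - |τ| / 2 else if u = 0 then huber τ v else 0) := by
  rcases lt_trichotomy u 0 with hu | hu | hu
  · refine ⟨-u / 2, by linarith, fun τ v hτ hv => ?_⟩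
    have hv' : v < -u / 2 := lt_of_le_of_lt (le_abs_self v) hv
    have h1 : u + v < 0 := by linarith
    rw [if_neg (by linarith), if_neg (by linarith)]
    unfold huber
    rcases eq_or_ne τ 0 with h | h
    · simp [h, max_eq_left hu.le, max_eq_left h1.le]
    · rw [if_neg h, if_neg (by push_neg; linarith [abs_nonneg τ]), if_neg h1.not_ge,
        if_pos rfl, max_eq_left hu.le]
      ring
    -- careful: |τ| < u+v is false since u+v<0 ≤ |τ|
  · subst hu
    refine ⟨1, one_pos, fun τ v hτ hv => ?_⟩
    simp [huber]
  · refine ⟨u / 2, by linarith, fun τ v hτ hv => ?_⟩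
    have hτ' : |τ| < u / 2 := hτ
    have hv' : -(u / 2) < v := neg_lt_of_abs_lt hv
    have h1 : |τ| < u + v := by linarith
    rw [if_pos hu]
    unfold huber
    rcases eq_or_ne τ 0 with h | h
    · simp [h, max_eq_right hu.le, max_eq_right (by linarith : (0:ℝ) ≤ u + v)]
    · rw [if_neg h, if_pos h1, if_pos rfl, max_eq_right hu.le]
      ring
end

section
/- For every ε ∈ ℝ and every real symmetric n×n matrix W, one has ‖Φ(ε,W) − Π(W)‖_F ≤ (√n/2)·|ε|; in particular Φ(ε,W) → Π(W) as ε → 0, uniformly in W. -/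
/-- The smoothed projection `Φ(ε,W) = h(ε,·)[W]` via the primary matrix function. -/
noncomputable def Phi {n : ℕ} (ε : ℝ) {W : Matrix (Fin n) (Fin n) ℝ}
    (hW : W.IsHermitian) : Matrix (Fin n) (Fin n) ℝ :=
  hW.cfc (huber ε)

/-- The projection onto the PSD cone, `Π(W) = (t ↦ max(t,0))[W]`. -/
noncomputable def PiPSD {n : ℕ} {W : Matrix (Fin n) (Fin n) ℝ}
    (hW : W.IsHermitian) : Matrix (Fin n) (Fin n) ℝ :=
  hW.cfc (fun t => max t 0)

/-- The Frobenius norm of a real matrix. -/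
noncomputable def frobNorm {n : ℕ} (M : Matrix (Fin n) (Fin n) ℝ) : ℝ :=
  Real.sqrt (∑ i, ∑ j, (M i j) ^ 2)

/-!
`Φ(ε,W) − Π(W)` is the single matrix function `(h(ε,·) − max(·,0))[W]`. The squared Frobenius
norm of a real matrix function `f[W]` is `tr (f[W]²) = ∑ᵢ f(λᵢ)²`, and the scalar gap
`|h(ε,t) − max(t,0)|` never exceeds `|ε|/2` (it is attained at `t = |ε|`), so the norm is at
most `√n · |ε|/2`.
-/

lemma abs_huber_sub_max_le (ε t : ℝ) : |huber ε t - max t 0| ≤ |ε| / 2 := by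
  unfold huber
  split_ifs with hε hlt hnonneg
  · simp [hε, max_comm]
  · rw [max_eq_left (by linarith [abs_nonneg ε]), abs_le]
    constructor <;> linarith [abs_nonneg ε]
  · have hpos : 0 < |ε| := abs_pos.2 hε
    rw [max_eq_left hnonneg, abs_le, le_sub_iff_add_le, sub_le_iff_le_add,
      le_div_iff₀ (by positivity), div_le_iff₀ (by positivity)]
    constructor <;> nlinarith
  · rw [max_eq_right (by linarith), sub_zero, abs_zero]
    positivity

namespace Matrix.IsHermitian

variable {m 𝕜 : Type*} [RCLike 𝕜] [Fintype m] [DecidableEq m] {A : Matrix m m 𝕜}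

lemma cfc_mul (hA : A.IsHermitian) (f g : ℝ → ℝ) :
    hA.cfc (fun x ↦ f x * g x) = hA.cfc f * hA.cfc g := by
  simpa only [hA.cfc_eq] using _root_.cfc_mul f g A (A.finite_real_spectrum.continuousOn f)
    (A.finite_real_spectrum.continuousOn g)

lemma cfc_sub (hA : A.IsHermitian) (f g : ℝ → ℝ) :
    hA.cfc (fun x ↦ f x - g x) = hA.cfc f - hA.cfc g := by
  simpa only [hA.cfc_eq] using _root_.cfc_sub f g A (A.finite_real_spectrum.continuousOn f)
    (A.finite_real_spectrum.continuousOn g)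

lemma isHermitian_cfc (hA : A.IsHermitian) (f : ℝ → ℝ) : (hA.cfc f).IsHermitian :=
  hA.cfc_eq f ▸ cfc_predicate f A

lemma trace_cfc (hA : A.IsHermitian) (f : ℝ → ℝ) :
    (hA.cfc f).trace = ∑ i, (f (hA.eigenvalues i) : 𝕜) := by
  rw [Matrix.IsHermitian.cfc, Unitary.conjStarAlgAut_apply, trace_mul_cycle,
    Unitary.coe_star_mul_self, one_mul, trace_diagonal]
  rfl

end Matrix.IsHermitian

open Matrix in
lemma Matrix.sum_sq_entries_eq_trace_transpose_mul {m : Type*} [Fintype m] (M : Matrix m m ℝ) :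
    ∑ i, ∑ j, M i j ^ 2 = (Mᵀ * M).trace := by
  simp only [trace, diag_apply, mul_apply, transpose_apply, sq]
  exact Finset.sum_comm

open Matrix in
lemma Matrix.IsHermitian.sum_sq_entries_cfc {m : Type*} [Fintype m] [DecidableEq m]
    {A : Matrix m m ℝ} (hA : A.IsHermitian) (f : ℝ → ℝ) :
    ∑ i, ∑ j, hA.cfc f i j ^ 2 = ∑ i, f (hA.eigenvalues i) ^ 2 := by
  have hsymm : (hA.cfc f)ᵀ = hA.cfc f := (hA.isHermitian_cfc f).eq
  rw [sum_sq_entries_eq_trace_transpose_mul, hsymm, ← hA.cfc_mul, hA.trace_cfc]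
  simp [sq]

lemma frobNorm_cfc_le {n : ℕ} {W : Matrix (Fin n) (Fin n) ℝ} (hW : W.IsHermitian) {f : ℝ → ℝ}
    {C : ℝ} (hf : ∀ t, |f t| ≤ C) : frobNorm (hW.cfc f) ≤ Real.sqrt n * C := by
  have hC : 0 ≤ C := (abs_nonneg _).trans (hf 0)
  have hsum : ∑ i, f (hW.eigenvalues i) ^ 2 ≤ n * C ^ 2 := by
    simpa using Finset.sum_le_sum (s := Finset.univ) fun i _ ↦
      (sq_le_sq₀ (abs_nonneg _) hC).2 (hf (hW.eigenvalues i))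
  calc frobNorm (hW.cfc f) = Real.sqrt (∑ i, f (hW.eigenvalues i) ^ 2) := by
        rw [frobNorm, hW.sum_sq_entries_cfc]
    _ ≤ Real.sqrt (n * C ^ 2) := Real.sqrt_le_sqrt hsum
    _ = Real.sqrt n * C := by rw [Real.sqrt_mul n.cast_nonneg, Real.sqrt_sq hC]

theorem Phi_approx_proj_general {n : ℕ} (ε : ℝ)
    (W : Matrix (Fin n) (Fin n) ℝ) (hW : W.IsHermitian) :
    frobNorm (Phi ε hW - PiPSD hW) ≤ (Real.sqrt n / 2) * |ε| :=
  calc frobNorm (Phi ε hW - PiPSD hW) = frobNorm (hW.cfc fun t ↦ huber ε t - max t 0) := by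
        rw [Phi, PiPSD, hW.cfc_sub]
    _ ≤ Real.sqrt n * (|ε| / 2) := frobNorm_cfc_le hW (abs_huber_sub_max_le ε)
    _ = Real.sqrt n / 2 * |ε| := by ring

/-- `‖Φ(ε,W) − Π(W)‖_F ≤ (√n/2)·|ε|`: the smoothed projection approximates the metric
projection onto the PSD cone uniformly in `W` as `ε → 0`. -/
theorem Phi_approx_proj {n : ℕ} (hn : 0 < n) (ε : ℝ)
    (W : Matrix (Fin n) (Fin n) ℝ) (hW : W.IsHermitian) :
    frobNorm (Phi ε hW - PiPSD hW) ≤ (Real.sqrt n / 2) * |ε| :=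
  Phi_approx_proj_general ε W hW
end

section
/- For all real symmetric n×n matrices X and Z: X = Π(X − Z) holds if and only if X is positive semidefinite, Z is positive semidefinite, and trace(X·Z) = 0. (This is the reformulation of the SDP complementarity conditions X ∈ S₊ⁿ, Z ∈ S₊ⁿ, ⟨X,Z⟩ = 0 as the single nonsmooth equation X − Π(X − Z) = 0.) -/
open Matrix
open scoped MatrixOrder ComplexOrder

theorem Matrix.PosSemidef.trace_mul_eq_zero_iff {𝕜 ι : Type*} [RCLike 𝕜] [Fintype ι]
    {A B : Matrix ι ι 𝕜} (hA : A.PosSemidef) (hB : B.PosSemidef) :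
    (A * B).trace = 0 ↔ A * B = 0 := by
  classical
  obtain ⟨C, rfl⟩ := CStarAlgebra.nonneg_iff_eq_star_mul_self.mp hA.nonneg
  obtain ⟨D, rfl⟩ := CStarAlgebra.nonneg_iff_eq_star_mul_self.mp hB.nonneg
  simp only [star_eq_conjTranspose]
  have htrace : (Cᴴ * C * (Dᴴ * D)).trace = ((D * Cᴴ)ᴴ * (D * Cᴴ)).trace := by
    rw [conjTranspose_mul, conjTranspose_conjTranspose, Matrix.mul_assoc, trace_mul_comm]
    simp only [Matrix.mul_assoc]
  have hprod : Cᴴ * C * (Dᴴ * D) = Cᴴ * (D * Cᴴ)ᴴ * D := by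
    rw [conjTranspose_mul, conjTranspose_conjTranspose]
    simp only [Matrix.mul_assoc]
  refine ⟨fun h => ?_, fun h => by rw [h, trace_zero]⟩
  rw [htrace, trace_conjTranspose_mul_self_eq_zero_iff] at h
  rw [hprod, h, conjTranspose_zero, Matrix.mul_zero, Matrix.zero_mul]

namespace CFC

variable {A : Type*} [NonUnitalRing A] [Module ℝ A] [SMulCommClass ℝ A A] [IsScalarTower ℝ A A]
  [StarRing A] [TopologicalSpace A] [NonUnitalContinuousFunctionalCalculus ℝ A IsSelfAdjoint]
  [PartialOrder A] [StarOrderedRing A] [NonnegSpectrumClass ℝ A] [IsSemitopologicalRing A]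
  [T2Space A]

theorem eq_posPart_sub_iff {a b : A} (hab : IsSelfAdjoint (a - b)) :
    a = (a - b)⁺ ↔ 0 ≤ a ∧ 0 ≤ b ∧ a * b = 0 := by
  constructor
  · intro ha
    have hb : b = (a - b)⁻ :=
      calc b = (a - b)⁺ - (a - b) := by rw [← ha, sub_sub_cancel]
        _ = (a - b)⁻ := by nth_rw 2 [← posPart_sub_negPart (a - b) hab]; abel
    refine ⟨ha ▸ posPart_nonneg _, hb ▸ negPart_nonneg _, ?_⟩
    rw [← posPart_mul_negPart (a - b), ← hb, ← ha]
  · rintro ⟨ha, hb, hab0⟩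
    exact (posPart_negPart_unique rfl hab0 ha hb).1.symm

end CFC

theorem PiPSD_eq_posPart {n : ℕ} {W : Matrix (Fin n) (Fin n) ℝ} (hW : W.IsHermitian) :
    PiPSD hW = W⁺ := by
  rw [PiPSD, ← hW.cfc_eq, CFC.posPart_def, cfcₙ_eq_cfc]
  rfl

theorem proj_complementarity_general {n : ℕ}
    (X Z : Matrix (Fin n) (Fin n) ℝ) (hX : X.IsHermitian) (hZ : Z.IsHermitian) :
    X = PiPSD (hX.sub hZ) ↔
      X.PosSemidef ∧ Z.PosSemidef ∧ (X * Z).trace = 0 := by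
  rw [PiPSD_eq_posPart, CFC.eq_posPart_sub_iff (hX.sub hZ), nonneg_iff_posSemidef,
    nonneg_iff_posSemidef]
  refine and_congr_right fun hXpsd => and_congr_right fun hZpsd => ?_
  exact (hXpsd.trace_mul_eq_zero_iff hZpsd).symm

/-- For symmetric `X`, `Z`: `X = Π(X − Z)` iff `X ⪰ 0`, `Z ⪰ 0` and `⟨X,Z⟩ = trace(XZ) = 0`:
the SDP complementarity conditions as a single nonsmooth equation. -/
theorem proj_complementarity {n : ℕ} (hn : 0 < n)
    (X Z : Matrix (Fin n) (Fin n) ℝ) (hX : X.IsHermitian) (hZ : Z.IsHermitian) :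
    X = PiPSD (hX.sub hZ) ↔
      X.PosSemidef ∧ Z.PosSemidef ∧ (X * Z).trace = 0 :=
  proj_complementarity_general X Z hX hZ
end

section
/- Let E be a finite-dimensional real inner product space, m a positive integer, A : E → ℝᵐ a linear map with adjoint A*, and V : E → E a linear map that is self-adjoint (⟨V x, y⟩ = ⟨x, V y⟩ for all x, y) and satisfies 0 ≤ ⟨V x, x⟩ ≤ ⟨x, x⟩ for all x ∈ E. Let μ_p > 0 and μ_c > 0. If ΔX, ΔZ ∈ E and Δy ∈ ℝᵐ satisfy A(ΔX) + μ_p·Δy = 0, −A*(Δy) − ΔZ = 0, and (1 + μ_c)·ΔX − V(ΔX) + V(ΔZ) = 0, then ΔX = 0, Δy = 0, and ΔZ = 0. (This is the core of the nonsingularity of the Jacobian Ê′(ε,X,y,Z) for ε > 0, since V = Φ′₂(ε, X−Z) is self-adjoint with 0 ⪯ V ⪯ I.) -/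
open scoped RealInnerProductSpace

/-- Core of the nonsingularity of the Jacobian `Ê′(ε,X,y,Z)` for `ε > 0`: if `A : E → ℝᵐ` is
linear, `V : E → E` is self-adjoint with `0 ⪯ V ⪯ I`, and `μ_p, μ_c > 0`, then the homogeneous
Newton system has only the trivial solution. -/
theorem newton_system_nonsingular
    {E : Type*} [NormedAddCommGroup E] [InnerProductSpace ℝ E] [FiniteDimensional ℝ E]
    {m : ℕ} (hm : 0 < m)
    (A : E →ₗ[ℝ] EuclideanSpace ℝ (Fin m)) (V : E →ₗ[ℝ] E)
    (hVsa : ∀ x y : E, ⟪V x, y⟫ = ⟪x, V y⟫)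
    (hV0 : ∀ x : E, 0 ≤ ⟪V x, x⟫) (hV1 : ∀ x : E, ⟪V x, x⟫ ≤ ⟪x, x⟫)
    (μp μc : ℝ) (hμp : 0 < μp) (hμc : 0 < μc)
    (ΔX ΔZ : E) (Δy : EuclideanSpace ℝ (Fin m))
    (h1 : A ΔX + μp • Δy = 0)
    (h2 : -(LinearMap.adjoint A) Δy - ΔZ = 0)
    (h3 : (1 + μc) • ΔX - V ΔX + V ΔZ = 0) :
    ΔX = 0 ∧ Δy = 0 ∧ ΔZ = 0 := by
  have hZ : ΔZ = -(LinearMap.adjoint A) Δy := (sub_eq_zero.mp h2).symm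
  have hAX : A ΔX = -(μp • Δy) := by
    have := h1
    rw [add_eq_zero_iff_eq_neg] at this
    exact this
  -- ⟪ΔX, ΔZ⟫ = μp * ⟪Δy, Δy⟫
  have hXZ : ⟪ΔX, ΔZ⟫ = μp * ⟪Δy, Δy⟫ := by
    rw [hZ, inner_neg_right, LinearMap.adjoint_inner_right, hAX, inner_neg_left,
      real_inner_smul_left, neg_neg]
  have hXZ0 : 0 ≤ ⟪ΔX, ΔZ⟫ := by
    rw [hXZ]
    exact mul_nonneg hμp.le (real_inner_self_nonneg)
  -- inner h3 with ΔZ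
  have e1 : (1 + μc) * ⟪ΔX, ΔZ⟫ - ⟪V ΔX, ΔZ⟫ + ⟪V ΔZ, ΔZ⟫ = 0 := by
    have := congrArg (fun w => ⟪w, ΔZ⟫) h3
    simpa [inner_add_left, inner_sub_left, real_inner_smul_left] using this
  have hVXZ : 0 ≤ ⟪V ΔX, ΔZ⟫ := by
    nlinarith [hV0 ΔZ]
  -- inner h3 with ΔX
  have e2 : (1 + μc) * ⟪ΔX, ΔX⟫ - ⟪V ΔX, ΔX⟫ + ⟪V ΔZ, ΔX⟫ = 0 := by
    have := congrArg (fun w => ⟪w, ΔX⟫) h3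
    simpa [inner_add_left, inner_sub_left, real_inner_smul_left] using this
  have hsym : ⟪V ΔZ, ΔX⟫ = ⟪V ΔX, ΔZ⟫ := by
    rw [hVsa ΔZ ΔX, real_inner_comm]
  have hXX : ⟪ΔX, ΔX⟫ ≤ 0 := by
    nlinarith [hV1 ΔX, real_inner_self_nonneg (x := ΔX)]
  have hX : ΔX = 0 := by
    rw [← @inner_self_eq_zero ℝ]
    exact le_antisymm hXX real_inner_self_nonneg
  have hy : Δy = 0 := by
    have : μp * ⟪Δy, Δy⟫ = 0 := by rw [← hXZ, hX, inner_zero_left]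
    have h0 : ⟪Δy, Δy⟫ = 0 := by
      rcases mul_eq_zero.mp this with h | h
      · exact absurd h hμp.ne'
      · exact h
    exact inner_self_eq_zero.mp h0
  refine ⟨hX, hy, ?_⟩
  rw [hZ, hy, map_zero, neg_zero]
end

section
/- Let E be a finite-dimensional real inner product space, m a positive integer, A : E → ℝᵐ a linear map with adjoint A*, and V : E → E a linear map that is self-adjoint and satisfies 0 ≤ ⟨V x, x⟩ ≤ ⟨x, x⟩ for all x ∈ E. Let μ_p > 0 and μ_c > 0. Then the operator (1 + μ_c)·id_E − V is bijective, and the Schur complement operator T : ℝᵐ → ℝᵐ defined by T(y) := μ_p·y + A(((1 + μ_c)·id_E − V)⁻¹(V(A*(y)))) satisfies ⟨T y, y⟩ ≥ μ_p·‖y‖² for all y ∈ ℝᵐ; in particular T is positive definite. -/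
open scoped RealInnerProductSpace

/-- If `A : E → ℝᵐ` is linear, `V : E → E` is self-adjoint with `0 ⪯ V ⪯ I`, and
`μ_p, μ_c > 0`, then `(1+μ_c)·id − V` is bijective and the Schur complement operator
`T(y) = μ_p·y + A(((1+μ_c)·id − V)⁻¹(V(A*(y))))` satisfies `⟨T y, y⟩ ≥ μ_p‖y‖²`, i.e. it is
positive definite. (The inverse is expressed implicitly: whenever
`((1+μ_c)·id − V) x = V (A* y)`, the value `T y` equals `μ_p·y + A x`.) -/
theorem schur_complement_posdef
    {E : Type*} [NormedAddCommGroup E] [InnerProductSpace ℝ E] [FiniteDimensional ℝ E]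
    {m : ℕ} (hm : 0 < m)
    (A : E →ₗ[ℝ] EuclideanSpace ℝ (Fin m)) (V : E →ₗ[ℝ] E)
    (hVsa : ∀ x y : E, ⟪V x, y⟫ = ⟪x, V y⟫)
    (hV0 : ∀ x : E, 0 ≤ ⟪V x, x⟫) (hV1 : ∀ x : E, ⟪V x, x⟫ ≤ ⟪x, x⟫)
    (μp μc : ℝ) (hμp : 0 < μp) (hμc : 0 < μc) :
    Function.Bijective ((1 + μc) • (LinearMap.id : E →ₗ[ℝ] E) - V) ∧
      ∀ (y : EuclideanSpace ℝ (Fin m)) (x : E),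
        ((1 + μc) • (LinearMap.id : E →ₗ[ℝ] E) - V) x = V ((LinearMap.adjoint A) y) →
          μp * ‖y‖ ^ 2 ≤ ⟪μp • y + A x, y⟫ := by
  set L : E →ₗ[ℝ] E := (1 + μc) • (LinearMap.id : E →ₗ[ℝ] E) - V with hL
  -- Cauchy–Schwarz for the PSD form ⟪V·,·⟫
  have hCS : ∀ u v : E, ⟪V u, v⟫ ^ 2 ≤ ⟪V u, u⟫ * ⟪V v, v⟫ := by
    intro u v
    have h := discrim_le_zero (a := ⟪V v, v⟫) (b := 2 * ⟪V u, v⟫) (c := ⟪V u, u⟫) ?_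
    · rw [discrim] at h; nlinarith
    · intro t
      have h0 := hV0 (u + t • v)
      have hexp : ⟪V (u + t • v), u + t • v⟫
          = ⟪V u, u⟫ + 2 * t * ⟪V u, v⟫ + t ^ 2 * ⟪V v, v⟫ := by
        have hc : ⟪V v, u⟫ = ⟪V u, v⟫ := by
          rw [hVsa v u, real_inner_comm]
        simp only [map_add, map_smul, inner_add_left, inner_add_right,
          real_inner_smul_left, real_inner_smul_right, hc]
        ring
      rw [hexp] at h0
      nlinarith
  -- V² ≤ V pointwise
  have hVV : ∀ w : E, ⟪V w, V w⟫ ≤ ⟪V w, w⟫ := by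
    intro w
    have h1 := hCS w (V w)
    have h2 := hV1 (V w)
    have h3 := hV0 w
    have h4 : (0:ℝ) ≤ ⟪V w, V w⟫ := real_inner_self_nonneg
    rcases eq_or_lt_of_le h4 with h | h
    · linarith
    · nlinarith
  -- injectivity of L
  have hinj : Function.Injective L := by
    rw [← LinearMap.ker_eq_bot]
    rw [Submodule.eq_bot_iff]
    intro x hx
    rw [LinearMap.mem_ker] at hx
    have hx' : (1 + μc) • x - V x = 0 := by simpa [L] using hx
    have : ⟪(1 + μc) • x - V x, x⟫ = 0 := by rw [hx']; simp
    rw [inner_sub_left, real_inner_smul_left] at this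
    have h1 := hV1 x
    have h2 : (0:ℝ) ≤ ⟪x, x⟫ := real_inner_self_nonneg
    have hxx : ⟪x, x⟫ = 0 := by nlinarith
    exact inner_self_eq_zero.mp hxx
  refine ⟨⟨hinj, (LinearMap.injective_iff_surjective).mp hinj⟩, ?_⟩
  intro y x hx
  set z := (LinearMap.adjoint A) y with hz
  have hx' : (1 + μc) • x - V x = V z := by simpa [L] using hx
  set w := x + z with hw
  have hVw : V w = (1 + μc) • x := by
    rw [hw, map_add, ← hx']; abel
  -- key inner products
  have c1 : ⟪V w, w⟫ = (1 + μc) * ⟪x, w⟫ := by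
    rw [hVw, real_inner_smul_left]
  have c2 : ⟪V w, V w⟫ = (1 + μc) ^ 2 * ⟪x, x⟫ := by
    rw [hVw, real_inner_smul_left, real_inner_smul_right]; ring
  have hxz : (0:ℝ) ≤ ⟪x, z⟫ := by
    have h1 := hVV w
    have hxw : ⟪x, w⟫ = ⟪x, x⟫ + ⟪x, z⟫ := by rw [hw, inner_add_right]
    have hp : (0:ℝ) ≤ ⟪x, x⟫ := real_inner_self_nonneg
    have h4 : (1 + μc) * ⟪x, x⟫ ≤ ⟪x, w⟫ := by
      have h3 : (1 + μc) * ((1 + μc) * ⟪x, x⟫) ≤ (1 + μc) * ⟪x, w⟫ := by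
        nlinarith [h1, c1, c2]
      exact le_of_mul_le_mul_left h3 (by linarith)
    nlinarith [mul_nonneg hμc.le hp]
  have hAx : ⟪A x, y⟫ = ⟪x, z⟫ := by
    rw [hz, ← LinearMap.adjoint_inner_right]
  rw [inner_add_left, real_inner_smul_left, hAx, real_inner_self_eq_norm_sq]
  nlinarith
end

section
/- Let τ > 0, r ≥ 0, ε̂ ≥ 0, η̂ ≥ 0, and let ψ ≥ 0 and ε ≥ 0 be real numbers with ε² ≤ ψ. Then −2ψ + 2·r·min(1, ψ^((1+τ)/2))·ε·ε̂ + 2·η̂·ψ^(1/2)·√(ψ − ε²) ≤ 2·(√2·max(r·ε̂, η̂) − 1)·ψ. -/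
/-- Key descent inequality for the line search of the squared smoothing Newton method:
with `ψ = ‖Ê‖²` and `ε² ≤ ψ`,
`−2ψ + 2r·min(1, ψ^((1+τ)/2))·ε·ε̂ + 2η̂·ψ^(1/2)·√(ψ−ε²) ≤ 2(√2·max(r·ε̂, η̂) − 1)·ψ`. -/
theorem descent_inequality (τ r ehat etahat ψ ε : ℝ)
    (hτ : 0 < τ) (hr : 0 ≤ r) (hehat : 0 ≤ ehat) (hetahat : 0 ≤ etahat)
    (hψ : 0 ≤ ψ) (hε : 0 ≤ ε) (hεψ : ε ^ 2 ≤ ψ) :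
    -2 * ψ + 2 * r * min 1 (ψ ^ ((1 + τ) / 2)) * ε * ehat
        + 2 * etahat * ψ ^ ((1 : ℝ) / 2) * Real.sqrt (ψ - ε ^ 2)
      ≤ 2 * (Real.sqrt 2 * max (r * ehat) etahat - 1) * ψ := by
  set m := min 1 (ψ ^ ((1 + τ) / 2)) with hm_def
  set s := Real.sqrt (ψ - ε ^ 2) with hs_def
  set sp := Real.sqrt ψ with hsp_def
  have hrp : ψ ^ ((1 : ℝ) / 2) = sp := (Real.sqrt_eq_rpow ψ).symm
  have hs : 0 ≤ s := Real.sqrt_nonneg _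
  have hsp : 0 ≤ sp := Real.sqrt_nonneg _
  have hs2 : s ^ 2 = ψ - ε ^ 2 := Real.sq_sqrt (by linarith)
  have hsp2 : sp ^ 2 = ψ := Real.sq_sqrt hψ
  have hm0 : 0 ≤ m := le_min zero_le_one (Real.rpow_nonneg hψ _)
  have hεsp : ε ≤ sp := (Real.le_sqrt hε hψ).mpr hεψ
  have hm : m ≤ sp := by
    rcases le_or_gt 1 ψ with h | h
    · calc m ≤ 1 := min_le_left _ _
        _ ≤ sp := by rw [hsp_def]; exact Real.one_le_sqrt.mpr h
    · rcases eq_or_lt_of_le hψ with h0 | h0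
      · have : ψ ^ ((1 + τ) / 2) = 0 := by
          rw [← h0, Real.zero_rpow (by positivity)]
        rw [hm_def, this]
        simp [hsp_def, ← h0]
      · calc m ≤ ψ ^ ((1 + τ) / 2) := min_le_right _ _
          _ ≤ ψ ^ ((1 : ℝ) / 2) := by
            apply Real.rpow_le_rpow_of_exponent_ge h0 h.le
            linarith
          _ = sp := by rw [hsp_def, Real.sqrt_eq_rpow]
  set M := max (r * ehat) etahat with hM_def
  have hM0 : 0 ≤ M := le_trans hetahat (le_max_right _ _)
  have ha : r * ehat ≤ M := le_max_left _ _
  have hb : etahat ≤ M := le_max_right _ _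
  have hxy : m * ε + sp * s ≤ Real.sqrt 2 * ψ := by
    have hsq : (m * ε + sp * s) ^ 2 ≤ 2 * ψ ^ 2 := by
      nlinarith [sq_nonneg (m * ε - sp * s), mul_le_mul_of_nonneg_right
        (mul_le_mul hm hεsp hε hsp) (sq_nonneg 1), sq_nonneg ε, sq_nonneg sp,
        mul_le_mul hm hm hm0 hsp, sq_nonneg s]
    have h1 : m * ε + sp * s ≤ Real.sqrt (2 * ψ ^ 2) :=
      (Real.le_sqrt (by positivity) (by positivity)).mpr hsq
    calc m * ε + sp * s ≤ Real.sqrt (2 * ψ ^ 2) := h1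
      _ = Real.sqrt 2 * ψ := by
        rw [Real.sqrt_mul (by norm_num), Real.sqrt_sq hψ]
  rw [hrp]
  have key : (r * ehat) * (m * ε) + etahat * (sp * s) ≤ Real.sqrt 2 * M * ψ := by
    have h1 : (r * ehat) * (m * ε) ≤ M * (m * ε) :=
      mul_le_mul_of_nonneg_right ha (by positivity)
    have h2 : etahat * (sp * s) ≤ M * (sp * s) :=
      mul_le_mul_of_nonneg_right hb (by positivity)
    have h3 : M * (m * ε + sp * s) ≤ M * (Real.sqrt 2 * ψ) :=
      mul_le_mul_of_nonneg_left hxy hM0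
    nlinarith
  nlinarith [key]
end
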